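/- Let X, Y be discrete random variables and T a deterministic function of X inducing a partition 𝒜 with I(X,Y) − I(T(X),Y) ≤ ε. Then Σ_{A∈𝒜} max_{x_1,x_2∈A} [P(x_1)P(x_2)/(2(P(x_1)+P(x_2)))] · D_1(P_{Y|x_1}, P_{Y|x_2})² ≤ ε, where the max over singleton clusters is taken to be 0. -/

import Mathlib

open Finset

noncomputable section

/-- Marginal of X under joint P. -/
def margX {α β : Type*} [Fintype β] (P : α → β → ℝ) (x : α) : ℝ := ∑ y, P x y

/-- Marginal of Y under joint P. -/
def margY {α β : Type*} [Fintype α] (P : α → β → ℝ) (y : β) : ℝ := ∑ x, P x y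

/-- Conditional probability P(y|x). -/
def condYX {α β : Type*} [Fintype β] (P : α → β → ℝ) (y : β) (x : α) : ℝ := P x y / margX P x

/-- Conditional probability P(x|y). -/
def condXY {α β : Type*} [Fintype α] (P : α → β → ℝ) (x : α) (y : β) : ℝ := P x y / margY P y

/-- Mutual information of a discrete joint distribution (natural log). -/
def MI {α β : Type*} [Fintype α] [Fintype β] (P : α → β → ℝ) : ℝ :=
  ∑ x, ∑ y, P x y * Real.log (P x y / (margX P x * margY P y))

/-- Joint distribution of (T(X), Y). -/
def jointT {α β τ : Type*} [Fintype α] [DecidableEq τ] (P : α → β → ℝ) (T : α → τ)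
    (t : τ) (y : β) : ℝ :=
  ∑ x ∈ Finset.univ.filter (fun x => T x = t), P x y

/-- Conditional distribution of Y given the cluster T(X) = t. -/
def condYT {α β τ : Type*} [Fintype α] [Fintype β] [DecidableEq τ] (P : α → β → ℝ)
    (T : α → τ) (t : τ) (y : β) : ℝ :=
  jointT P T t y / (∑ x ∈ Finset.univ.filter (fun x => T x = t), margX P x)

/-- Kullback–Leibler divergence (natural log). -/
def KL {β : Type*} [Fintype β] (p q : β → ℝ) : ℝ := ∑ y, p y * Real.log (p y / q y)

/-- L1 distance between distributions. -/
def D1 {β : Type*} [Fintype β] (p q : β → ℝ) : ℝ := ∑ y, |p y - q y|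
open scoped Classical

/-- Per-pair bound term within a cluster. -/
def pairTerm {α β : Type*} [Fintype α] [Fintype β] (P : α → β → ℝ) (x₁ x₂ : α) : ℝ :=
  margX P x₁ * margX P x₂ / (2 * (margX P x₁ + margX P x₂)) *
    D1 (fun y => condYX P y x₁) (fun y => condYX P y x₂) ^ 2

/-- Max of the pair terms over a cluster (0 for empty clusters; 0 for
singleton clusters since the only pair is the diagonal one). -/
def clusterMaxTerm {α β τ : Type*} [Fintype α] [Fintype β] (P : α → β → ℝ)
    (T : α → τ) (t : τ) : ℝ :=
  if h : ((Finset.univ.filter fun x => T x = t) ×ˢ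
      (Finset.univ.filter fun x => T x = t)).Nonempty then
    ((Finset.univ.filter fun x => T x = t) ×ˢ
      (Finset.univ.filter fun x => T x = t)).sup' h (fun p => pairTerm P p.1 p.2)
  else 0

/-!
The information loss equals `∑ₓ p(x) KL(P_{Y|x} ‖ P_{Y|T(x)})`, a sum of nonnegative terms grouped
by cluster. For two points `x₁, x₂` of a cluster with weights `w₁, w₂`, the compensation identity
`w₁ KL(p‖Q) + w₂ KL(q‖Q) = w₁ KL(p‖M) + w₂ KL(q‖M) + (w₁ + w₂) KL(M‖Q)` for the mixture
`M = (w₁ p + w₂ q) / (w₁ + w₂)` shows that merging only `x₁` and `x₂` loses less information than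
merging the whole cluster, and Pinsker's inequality bounds the former loss below by the pair term.
Pinsker's inequality follows from `3 (x - 1)² ≤ (2x + 4) klFun x` and Cauchy–Schwarz.
-/

open Real InformationTheory

lemma hasDerivAt_add_one_mul_log_sub {x : ℝ} (hx : x ≠ 0) :
    HasDerivAt (fun x => (x + 1) * log x - 2 * (x - 1)) (log x - 1 + x⁻¹) x := by
  refine ((((hasDerivAt_id x).add_const 1).mul (hasDerivAt_log hx)).sub
    (((hasDerivAt_id x).sub_const 1).const_mul 2)).congr_deriv ?_
  simp only [id]
  field_simp
  ring

lemma monotoneOn_add_one_mul_log_sub :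
    MonotoneOn (fun x => (x + 1) * log x - 2 * (x - 1)) (Set.Ioi 0) := by
  refine monotoneOn_of_hasDerivWithinAt_nonneg (convex_Ioi 0)
    (fun x hx => (hasDerivAt_add_one_mul_log_sub hx.ne').continuousAt.continuousWithinAt)
    (fun x hx => (hasDerivAt_add_one_mul_log_sub
      (interior_subset hx : x ∈ Set.Ioi 0).ne').hasDerivWithinAt) fun x hx => ?_
  rw [interior_Ioi] at hx
  linarith [one_sub_inv_le_log_of_pos (Set.mem_Ioi.1 hx)]

lemma hasDerivAt_two_mul_add_four_mul_klFun_sub {x : ℝ} (hx : x ≠ 0) :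
    HasDerivAt (fun x => (2 * x + 4) * klFun x - 3 * (x - 1) ^ 2)
      (4 * ((x + 1) * log x - 2 * (x - 1))) x := by
  refine ((((hasDerivAt_id x).const_mul 2).add_const 4).mul (hasDerivAt_klFun hx)).sub
    ((((hasDerivAt_id x).sub_const 1).pow 2).const_mul 3) |>.congr_deriv ?_
  simp only [klFun_apply, id]
  ring

lemma two_mul_sub_one_le_add_one_mul_log {x : ℝ} (hx : 1 ≤ x) :
    2 * (x - 1) ≤ (x + 1) * log x := by
  have := monotoneOn_add_one_mul_log_sub (Set.mem_Ioi.2 one_pos)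
    (Set.mem_Ioi.2 (one_pos.trans_le hx)) hx
  norm_num at this
  linarith

lemma add_one_mul_log_le_two_mul_sub_one {x : ℝ} (h0 : 0 < x) (hx : x ≤ 1) :
    (x + 1) * log x ≤ 2 * (x - 1) := by
  have := monotoneOn_add_one_mul_log_sub h0 (Set.mem_Ioi.2 one_pos) hx
  norm_num at this
  linarith

/-- The function `(2x + 4) klFun x - 3 (x - 1)²` vanishes at `1`, and its derivative
`4 ((x + 1) log x - 2 (x - 1))` has the sign of `x - 1`. -/
lemma three_mul_sq_sub_one_le_klFun {x : ℝ} (hx : 0 ≤ x) :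
    3 * (x - 1) ^ 2 ≤ (2 * x + 4) * klFun x := by
  set g := fun x : ℝ => (2 * x + 4) * klFun x - 3 * (x - 1) ^ 2
  set g' := fun x : ℝ => 4 * ((x + 1) * log x - 2 * (x - 1))
  have hg : Continuous g := by fun_prop
  suffices g 1 ≤ g x by simpa [g, klFun_one] using this
  rcases le_total 1 x with h1 | h1
  · refine monotoneOn_of_hasDerivWithinAt_nonneg (f' := g') (convex_Ici 1) hg.continuousOn
      (fun y hy => ?_) (fun y hy => ?_) Set.self_mem_Ici h1 h1
    all_goals rw [interior_Ici, Set.mem_Ioi] at hy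
    · exact (hasDerivAt_two_mul_add_four_mul_klFun_sub (one_pos.trans hy).ne').hasDerivWithinAt
    · linarith [two_mul_sub_one_le_add_one_mul_log hy.le]
  · refine antitoneOn_of_hasDerivWithinAt_nonpos (f' := g') (convex_Icc 0 1) hg.continuousOn
      (fun y hy => ?_) (fun y hy => ?_) ⟨hx, h1⟩ (Set.right_mem_Icc.2 zero_le_one) h1
    all_goals rw [interior_Icc] at hy
    · exact (hasDerivAt_two_mul_add_four_mul_klFun_sub hy.1.ne').hasDerivWithinAt
    · linarith [add_one_mul_log_le_two_mul_sub_one hy.1 hy.2.le]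

section Divergences

variable {β : Type*} [Fintype β] {p q Q : β → ℝ}

lemma D1_comm (p q : β → ℝ) : D1 p q = D1 q p := by
  simp only [D1, abs_sub_comm]

lemma D1_self (p : β → ℝ) : D1 p p = 0 := by
  simp [D1]

lemma D1_eq_mul_of_sub_eq {r s : β → ℝ} {c : ℝ} (hc : 0 ≤ c)
    (h : ∀ y, r y - s y = c * (p y - q y)) : D1 r s = c * D1 p q := by
  simp only [D1, h, abs_mul, abs_of_nonneg hc, mul_sum]

lemma KL_eq_sum_mul_klFun (hq : ∀ y, 0 < q y) (hpq : ∑ y, p y = ∑ y, q y) :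
    KL p q = ∑ y, q y * klFun (p y / q y) := by
  have h (y : β) : q y * klFun (p y / q y) = p y * log (p y / q y) + q y - p y := by
    have := (hq y).ne'
    rw [klFun_apply]
    field_simp
  simp only [h, sum_sub_distrib, sum_add_distrib, hpq, KL]
  ring

lemma KL_nonneg (hp : ∀ y, 0 ≤ p y) (hq : ∀ y, 0 < q y) (hpq : ∑ y, p y = ∑ y, q y) :
    0 ≤ KL p q := by
  rw [KL_eq_sum_mul_klFun hq hpq]
  exact sum_nonneg fun y _ => mul_nonneg (hq y).le (klFun_nonneg (div_nonneg (hp y) (hq y).le))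

lemma sq_sub_div_le_mul_klFun {a b : ℝ} (ha : 0 ≤ a) (hb : 0 < b) :
    (a - b) ^ 2 / (2 * a + 4 * b) ≤ b * klFun (a / b) / 3 := by
  have h := mul_le_mul_of_nonneg_left (three_mul_sq_sub_one_le_klFun (div_nonneg ha hb.le))
    (sq_nonneg b)
  rw [div_le_div_iff₀ (by positivity) three_pos]
  have e₁ : b ^ 2 * (3 * (a / b - 1) ^ 2) = 3 * (a - b) ^ 2 := by field_simp
  have e₂ : b ^ 2 * ((2 * (a / b) + 4) * klFun (a / b)) =
      (2 * a + 4 * b) * (b * klFun (a / b)) := by field_simp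
  linarith

/-- Pinsker's inequality. -/
theorem sq_D1_le_two_mul_KL (hp : ∀ y, 0 ≤ p y) (hq : ∀ y, 0 < q y) (hps : ∑ y, p y = 1)
    (hqs : ∑ y, q y = 1) : D1 p q ^ 2 ≤ 2 * KL p q := by
  have hden : ∑ y, (2 * p y + 4 * q y) = 6 := by
    rw [sum_add_distrib, ← mul_sum, ← mul_sum, hps, hqs]
    norm_num
  have h_cs := sq_sum_div_le_sum_sq_div univ (fun y => |p y - q y|)
    (g := fun y => 2 * p y + 4 * q y) fun y _ => by linarith [hp y, hq y]
  simp only [hden, sq_abs] at h_cs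
  have h_pt : ∑ y, (p y - q y) ^ 2 / (2 * p y + 4 * q y) ≤ ∑ y, q y * klFun (p y / q y) / 3 :=
    sum_le_sum fun y _ => sq_sub_div_le_mul_klFun (hp y) (hq y)
  rw [← sum_div, ← KL_eq_sum_mul_klFun hq (hps.trans hqs.symm)] at h_pt
  rw [D1]
  linarith

lemma KL_eq_KL_add_sum_mul_log (hp : ∀ y, 0 < p y) {M : β → ℝ} (hM : ∀ y, 0 < M y)
    (hQ : ∀ y, 0 < Q y) : KL p Q = KL p M + ∑ y, p y * log (M y / Q y) := by
  rw [KL, KL, ← sum_add_distrib]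
  refine sum_congr rfl fun y _ => ?_
  rw [← mul_add, ← log_mul (div_pos (hp y) (hM y)).ne' (div_pos (hM y) (hQ y)).ne',
    div_mul_div_cancel₀ (hM y).ne']

lemma KL_compensation {w₁ w₂ : ℝ} {M : β → ℝ} (hp : ∀ y, 0 < p y) (hq : ∀ y, 0 < q y)
    (hQ : ∀ y, 0 < Q y) (hMpos : ∀ y, 0 < M y)
    (hM : ∀ y, (w₁ + w₂) * M y = w₁ * p y + w₂ * q y) :
    w₁ * KL p Q + w₂ * KL q Q = w₁ * KL p M + w₂ * KL q M + (w₁ + w₂) * KL M Q := by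
  have hMQ : (w₁ + w₂) * KL M Q =
      w₁ * ∑ y, p y * log (M y / Q y) + w₂ * ∑ y, q y * log (M y / Q y) := by
    simp only [KL, mul_sum, ← sum_add_distrib]
    refine sum_congr rfl fun y _ => ?_
    rw [← mul_assoc, hM]
    ring
  rw [KL_eq_KL_add_sum_mul_log hp hMpos hQ, KL_eq_KL_add_sum_mul_log hq hMpos hQ, hMQ]
  ring

theorem mul_sq_D1_le_mul_KL_add_mul_KL {w₁ w₂ : ℝ} (hw₁ : 0 < w₁) (hw₂ : 0 < w₂)
    (hp : ∀ y, 0 < p y) (hq : ∀ y, 0 < q y) (hQ : ∀ y, 0 < Q y)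
    (hps : ∑ y, p y = 1) (hqs : ∑ y, q y = 1) (hQs : ∑ y, Q y = 1) :
    w₁ * w₂ / (2 * (w₁ + w₂)) * D1 p q ^ 2 ≤ w₁ * KL p Q + w₂ * KL q Q := by
  have hw : 0 < w₁ + w₂ := add_pos hw₁ hw₂
  set M : β → ℝ := fun y => (w₁ * p y + w₂ * q y) / (w₁ + w₂)
  have hMpos (y : β) : 0 < M y := by have := hp y; have := hq y; positivity
  have hMs : ∑ y, M y = 1 := by
    rw [← sum_div, sum_add_distrib, ← mul_sum, ← mul_sum, hps, hqs, mul_one, mul_one,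
      div_self hw.ne']
  have hpM : D1 p M = w₂ / (w₁ + w₂) * D1 p q :=
    D1_eq_mul_of_sub_eq (by positivity) fun y => by simp only [M]; field_simp; ring
  have hqM : D1 q M = w₁ / (w₁ + w₂) * D1 p q := by
    rw [D1_comm p q]
    exact D1_eq_mul_of_sub_eq (by positivity) fun y => by simp only [M]; field_simp; ring
  have h_pin_p := sq_D1_le_two_mul_KL (fun y => (hp y).le) hMpos hps hMs
  have h_pin_q := sq_D1_le_two_mul_KL (fun y => (hq y).le) hMpos hqs hMs
  have hMQ := KL_nonneg (fun y => (hMpos y).le) hQ (hMs.trans hQs.symm)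
  calc w₁ * w₂ / (2 * (w₁ + w₂)) * D1 p q ^ 2
      = w₁ * (D1 p M ^ 2 / 2) + w₂ * (D1 q M ^ 2 / 2) := by
        rw [hpM, hqM]
        field_simp
        ring
    _ ≤ w₁ * KL p M + w₂ * KL q M + (w₁ + w₂) * KL M Q := by
        linarith [mul_le_mul_of_nonneg_left h_pin_p hw₁.le,
          mul_le_mul_of_nonneg_left h_pin_q hw₂.le, mul_nonneg hw.le hMQ]
    _ = w₁ * KL p Q + w₂ * KL q Q :=
        (KL_compensation hp hq hQ hMpos fun y => by simp only [M]; field_simp).symm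

end Divergences

section Information

variable {α β τ : Type*} {P : α → β → ℝ}

lemma margX_pos [Fintype β] (hP : ∀ x y, 0 < P x y) [Nonempty β] (x : α) : 0 < margX P x :=
  sum_pos (fun y _ => hP x y) univ_nonempty

lemma margY_pos [Fintype α] (hP : ∀ x y, 0 < P x y) [Nonempty α] (y : β) : 0 < margY P y :=
  sum_pos (fun x _ => hP x y) univ_nonempty

lemma condYX_pos [Fintype β] (hP : ∀ x y, 0 < P x y) (x : α) (y : β) : 0 < condYX P y x :=
  have : Nonempty β := ⟨y⟩
  div_pos (hP x y) (margX_pos hP x)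

lemma sum_condYX [Fintype β] (hP : ∀ x y, 0 < P x y) [Nonempty β] (x : α) :
    ∑ y, condYX P y x = 1 := by
  simp only [condYX, ← sum_div]
  exact div_self (margX_pos hP x).ne'

lemma margX_jointT [Fintype α] [Fintype β] (T : α → τ) (t : τ) :
    margX (jointT P T) t = ∑ x with T x = t, margX P x :=
  sum_comm

lemma margY_jointT [Fintype α] [Fintype τ] (T : α → τ) (y : β) :
    margY (jointT P T) y = margY P y :=
  sum_fiberwise univ T (P · y)

lemma condYT_pos [Fintype α] [Fintype β] (hP : ∀ x y, 0 < P x y) {T : α → τ} {t : τ} {x : α}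
    (hx : T x = t) (y : β) :
    0 < condYT P T t y :=
  have : Nonempty β := ⟨y⟩
  div_pos (sum_pos (fun x _ => hP x y) ⟨x, mem_filter.2 ⟨mem_univ x, hx⟩⟩)
    (sum_pos (fun x _ => margX_pos hP x) ⟨x, mem_filter.2 ⟨mem_univ x, hx⟩⟩)

lemma sum_condYT [Fintype α] [Fintype β] (hP : ∀ x y, 0 < P x y) [Nonempty β] {T : α → τ}
    {t : τ} {x : α} (hx : T x = t) : ∑ y, condYT P T t y = 1 := by
  have h_mass := margX_jointT (P := P) T t
  rw [margX] at h_mass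
  simp only [condYT, ← sum_div, h_mass]
  exact div_self (sum_pos (fun x _ => margX_pos hP x) ⟨x, mem_filter.2 ⟨mem_univ x, hx⟩⟩).ne'

lemma MI_eq_sum_mul_log_condYX [Fintype α] [Fintype β] (P : α → β → ℝ) :
    MI P = ∑ x, ∑ y, P x y * log (condYX P y x / margY P y) := by
  simp only [MI, condYX, div_div]

lemma MI_jointT_eq_sum_mul_log_condYT [Fintype α] [Fintype β] [Fintype τ] (P : α → β → ℝ)
    (T : α → τ) :
    MI (jointT P T) = ∑ x, ∑ y, P x y * log (condYT P T (T x) y / margY P y) := by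
  calc MI (jointT P T) = ∑ t, ∑ y, jointT P T t y * log (condYT P T t y / margY P y) := by
        simp only [MI, margY_jointT, margX_jointT, ← div_div]
        rfl
    _ = ∑ t, ∑ x with T x = t, ∑ y, P x y * log (condYT P T (T x) y / margY P y) := by
        refine sum_congr rfl fun t _ => ?_
        rw [sum_comm]
        refine sum_congr rfl fun y _ => ?_
        rw [jointT, sum_mul]
        exact sum_congr rfl fun x hx => by rw [(mem_filter.1 hx).2]
    _ = _ := sum_fiberwise univ T _

theorem MI_sub_MI_jointT [Fintype α] [Fintype β] [Fintype τ] (hP : ∀ x y, 0 < P x y)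
    (T : α → τ) :
    MI P - MI (jointT P T) =
      ∑ x, margX P x * KL (fun y => condYX P y x) (condYT P T (T x)) := by
  rw [MI_eq_sum_mul_log_condYX, MI_jointT_eq_sum_mul_log_condYT, ← sum_sub_distrib]
  refine sum_congr rfl fun x _ => ?_
  rw [← sum_sub_distrib, KL, mul_sum]
  refine sum_congr rfl fun y _ => ?_
  have : Nonempty α := ⟨x⟩
  have : Nonempty β := ⟨y⟩
  rw [← mul_sub, ← log_div (div_pos (condYX_pos hP x y) (margY_pos hP y)).ne'
    (div_pos (condYT_pos hP rfl y) (margY_pos hP y)).ne', div_div_div_cancel_right₀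
    (margY_pos hP y).ne', ← mul_assoc, condYX, mul_div_cancel₀ _ (margX_pos hP x).ne']

lemma pairTerm_le_sum_mul_KL [Fintype α] [Fintype β] (hP : ∀ x y, 0 < P x y) [Nonempty β]
    {Q : β → ℝ} (hQ : ∀ y, 0 < Q y) (hQs : ∑ y, Q y = 1) (x₁ x₂ : α) :
    pairTerm P x₁ x₂ ≤ ∑ x ∈ {x₁, x₂}, margX P x * KL (fun y => condYX P y x) Q := by
  rcases eq_or_ne x₁ x₂ with rfl | hne
  · simpa [pairTerm, D1_self] using mul_nonneg (margX_pos hP x₁).le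
      (KL_nonneg (fun y => (condYX_pos hP x₁ y).le) hQ ((sum_condYX hP x₁).trans hQs.symm))
  · rw [sum_pair hne]
    exact mul_sq_D1_le_mul_KL_add_mul_KL (margX_pos hP x₁) (margX_pos hP x₂)
      (condYX_pos hP x₁) (condYX_pos hP x₂) hQ (sum_condYX hP x₁) (sum_condYX hP x₂) hQs

lemma clusterMaxTerm_le [Fintype α] [Fintype β] (hP : ∀ x y, 0 < P x y) [Nonempty β]
    (T : α → τ) (t : τ) :
    clusterMaxTerm P T t ≤
      ∑ x with T x = t, margX P x * KL (fun y => condYX P y x) (condYT P T t) := by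
  have h_nonneg : ∀ x ∈ univ.filter (T · = t),
      0 ≤ margX P x * KL (fun y => condYX P y x) (condYT P T t) := fun x hx =>
    mul_nonneg (margX_pos hP x).le (KL_nonneg (fun y => (condYX_pos hP x y).le)
      (condYT_pos hP (mem_filter.1 hx).2) ((sum_condYX hP x).trans
        (sum_condYT hP (mem_filter.1 hx).2).symm))
  rw [clusterMaxTerm]
  split_ifs with h
  · refine sup'_le _ _ fun ⟨x₁, x₂⟩ hx => ?_
    obtain ⟨hx₁, hx₂⟩ := mem_product.1 hx
    calc pairTerm P x₁ x₂
        ≤ ∑ x ∈ {x₁, x₂}, margX P x * KL (fun y => condYX P y x) (condYT P T t) :=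
          pairTerm_le_sum_mul_KL hP (condYT_pos hP (mem_filter.1 hx₁).2)
            (sum_condYT hP (mem_filter.1 hx₁).2) x₁ x₂
      _ ≤ _ := sum_le_sum_of_subset_of_nonneg
          (insert_subset_iff.2 ⟨hx₁, singleton_subset_iff.2 hx₂⟩) fun x hx _ => h_nonneg x hx
  · exact sum_nonneg h_nonneg

end Information

/-- Theorem 2 (main bound): if the information loss is at most ε, the sum over
clusters of the maximal pairwise bound terms is at most ε. -/
theorem IB_cluster_max_bound {α β τ : Type*} [Fintype α] [Fintype β] [Fintype τ]
    (P : α → β → ℝ) (hP : ∀ x y, 0 < P x y) (hsum : ∑ x, ∑ y, P x y = 1)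
    (T : α → τ) (ε : ℝ) (hloss : MI P - MI (jointT P T) ≤ ε) :
    ∑ t, clusterMaxTerm P T t ≤ ε := by
  have : Nonempty β := by
    by_contra h
    simp [not_nonempty_iff.1 h] at hsum
  calc ∑ t, clusterMaxTerm P T t
      ≤ ∑ t, ∑ x with T x = t, margX P x * KL (fun y => condYX P y x) (condYT P T t) :=
        sum_le_sum fun t _ => clusterMaxTerm_le hP T t
    _ = ∑ t, ∑ x with T x = t, margX P x * KL (fun y => condYX P y x) (condYT P T (T x)) :=
        sum_congr rfl fun t _ => sum_congr rfl fun x hx => by rw [(mem_filter.1 hx).2]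
    _ = MI P - MI (jointT P T) := (sum_fiberwise univ T _).trans (MI_sub_MI_jointT hP T).symm
    _ ≤ ε := hloss
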